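/- (Conditional mean of the deformed $q$-multinomial components) Let $0<q<1$, $\theta_1,\ldots,\theta_k>0$, $n\in\mathbb{N}$, $k\ge 2$, and let $(X_1,\ldots,X_k)$ follow the $q$-multinomial distribution of the first kind. Then for each $j=2,\ldots,k$ and each $(x_1,\ldots,x_{j-1})$ with $s_{j-1}=\sum_{i=1}^{j-1}x_i\le n$, the conditional mean of the deformed variable $[X_j]_{1/q}$ given $X_1=x_1,\ldots,X_{j-1}=x_{j-1}$ is $E\big([X_j]_{1/q}\mid X_1=x_1,\ldots,X_{j-1}=x_{j-1}\big) = [n-s_{j-1}]_q\,\frac{\theta_j}{1+\theta_j q^{\,n-s_{j-1}-1}}$; that is, $\sum_{x_j=0}^{n-s_{j-1}} [x_j]_{1/q}\binom{n-s_{j-1}}{x_j}_q \frac{\theta_j^{x_j} q^{\binom{x_j}{2}}}{\prod_{i=1}^{n-s_{j-1}}(1+\theta_j q^{i-1})} = [n-s_{j-1}]_q\,\frac{\theta_j}{1+\theta_j q^{\,n-s_{j-1}-1}}$. -/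

import Mathlib

open scoped BigOperators

/-- The `q`-factorial `[n]_q! = ∏_{k=1}^n (1-q^k)/(1-q)`. -/
noncomputable def qFact (q : ℝ) (n : ℕ) : ℝ :=
  ∏ k ∈ Finset.range n, (1 - q ^ (k + 1)) / (1 - q)

/-- The `q`-binomial coefficient. -/
noncomputable def qBinom (q : ℝ) (n x : ℕ) : ℝ :=
  qFact q n / (qFact q x * qFact q (n - x))

/-- The `q`-number `[n]_q = (1-q^n)/(1-q)`. -/
noncomputable def qNat (q : ℝ) (n : ℕ) : ℝ := (1 - q ^ n) / (1 - q)

/-- The deformed value `[x]_{1/q} = (q^{-x}-1)/(q^{-1}-1)`. -/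
noncomputable def qDef (q : ℝ) (x : ℕ) : ℝ := (q⁻¹ ^ x - 1) / (q⁻¹ - 1)

/-!
Write `m = n - s_{j-1}`. Since `[t]_{1/q} = [t]_q / q^{t-1}`, `[t]_q [m choose t]_q =
[m]_q [m-1 choose t-1]_q` and `q^{t(t-1)/2} = q^{(t-1)(t-2)/2} q^{t-1}`, the deformed mean sum
collapses to `[m]_q θ` times the `q`-binomial sum for `m - 1`, which by Rothe's identity is
`∏_{i<m-1} (1 + θ q^i)`. Dividing by `∏_{i<m} (1 + θ q^i)` leaves
`[m]_q θ / (1 + θ q^{m-1})`.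
-/

variable {q : ℝ}

lemma qFact_zero (q : ℝ) : qFact q 0 = 1 :=
  Finset.prod_range_zero _

lemma qFact_succ (q : ℝ) (n : ℕ) : qFact q (n + 1) = qFact q n * qNat q (n + 1) :=
  Finset.prod_range_succ _ n

lemma qNat_zero (q : ℝ) : qNat q 0 = 0 := by
  simp [qNat]

lemma qNat_add (hq1 : q ≠ 1) (a b : ℕ) : qNat q (a + b) = qNat q a + q ^ a * qNat q b := by
  have : 1 - q ≠ 0 := sub_ne_zero.mpr hq1.symm
  simp only [qNat]
  field_simp
  ring

lemma qNat_eq_geom_sum (hq1 : q ≠ 1) (n : ℕ) : qNat q n = ∑ i ∈ Finset.range n, q ^ i := by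
  rw [geom_sum_eq hq1, qNat, ← neg_div_neg_eq, neg_sub, neg_sub]

lemma qNat_pos (hq0 : 0 < q) (hq1 : q ≠ 1) {n : ℕ} (hn : n ≠ 0) : 0 < qNat q n := by
  rw [qNat_eq_geom_sum hq1]
  exact Finset.sum_pos (fun i _ => pow_pos hq0 i) (Finset.nonempty_range_iff.mpr hn)

lemma qFact_pos (hq0 : 0 < q) (hq1 : q ≠ 1) (n : ℕ) : 0 < qFact q n :=
  Finset.prod_pos fun k _ => qNat_pos hq0 hq1 k.succ_ne_zero

lemma qBinom_zero_right (hq0 : 0 < q) (hq1 : q ≠ 1) (m : ℕ) : qBinom q m 0 = 1 := by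
  rw [qBinom, Nat.sub_zero, qFact_zero, one_mul, div_self (qFact_pos hq0 hq1 m).ne']

lemma qBinom_self (hq0 : 0 < q) (hq1 : q ≠ 1) (m : ℕ) : qBinom q m m = 1 := by
  rw [qBinom, Nat.sub_self, qFact_zero, mul_one, div_self (qFact_pos hq0 hq1 m).ne']

-- `[m+1]_q = [m-u]_q + q^{m-u} [u+1]_q` drives the `q`-Pascal rule.
lemma qBinom_succ_succ (hq0 : 0 < q) (hq1 : q ≠ 1) {m u : ℕ} (hu : u < m) :
    qBinom q (m + 1) (u + 1) = qBinom q m (u + 1) + q ^ (m - u) * qBinom q m u := by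
  obtain ⟨v, rfl⟩ : ∃ v, m = u + v + 1 := ⟨m - u - 1, by omega⟩
  have hsplit : qNat q (u + v + 1 + 1) = qNat q (v + 1) + q ^ (v + 1) * qNat q (u + 1) := by
    rw [← qNat_add hq1]; ring_nf
  have hF := fun n => (qFact_pos hq0 hq1 n).ne'
  have hN := fun n => (qNat_pos hq0 hq1 (Nat.succ_ne_zero n)).ne'
  simp only [qBinom, show u + v + 1 + 1 - (u + 1) = v + 1 by omega,
    show u + v + 1 - (u + 1) = v by omega, show u + v + 1 - u = v + 1 by omega]
  rw [qFact_succ q (u + v + 1), qFact_succ q u, qFact_succ q v, hsplit]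
  field_simp [hF u, hF v, hF (u + v + 1), hN u, hN v]

lemma qBinom_succ_succ_mul_qNat (hq0 : 0 < q) (hq1 : q ≠ 1) {m u : ℕ} (hu : u ≤ m) :
    qBinom q (m + 1) (u + 1) * qNat q (u + 1) = qNat q (m + 1) * qBinom q m u := by
  obtain ⟨v, rfl⟩ : ∃ v, m = u + v := ⟨m - u, by omega⟩
  have hF := fun n => (qFact_pos hq0 hq1 n).ne'
  have hN := fun n => (qNat_pos hq0 hq1 (Nat.succ_ne_zero n)).ne'
  simp only [qBinom, show u + v + 1 - (u + 1) = v by omega, show u + v - u = v by omega]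
  rw [qFact_succ q (u + v), qFact_succ q u]
  field_simp [hF u, hF v, hF (u + v), hN u]

lemma qDef_succ (hq0 : q ≠ 0) (hq1 : q ≠ 1) (u : ℕ) :
    qDef q (u + 1) = qNat q (u + 1) / q ^ u := by
  have h1 : 1 - q ≠ 0 := sub_ne_zero.mpr hq1.symm
  have h2 : q⁻¹ - 1 ≠ 0 := sub_ne_zero.mpr (inv_ne_one.mpr hq1)
  simp only [qDef, qNat, inv_pow]
  field_simp
  ring

lemma qDef_zero (q : ℝ) : qDef q 0 = 0 := by
  simp [qDef]

noncomputable def qBinomWeight (q θ : ℝ) (m t : ℕ) : ℝ :=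
  qBinom q m t * q ^ (t * (t - 1) / 2) * θ ^ t

lemma qBinomWeight_zero_right (hq0 : 0 < q) (hq1 : q ≠ 1) (θ : ℝ) (m : ℕ) :
    qBinomWeight q θ m 0 = 1 := by
  simp [qBinomWeight, qBinom_zero_right hq0 hq1]

lemma qBinomWeight_succ_self (hq0 : 0 < q) (hq1 : q ≠ 1) (θ : ℝ) (m : ℕ) :
    qBinomWeight q θ (m + 1) (m + 1) = θ * q ^ m * qBinomWeight q θ m m := by
  simp only [qBinomWeight, qBinom_self hq0 hq1, Nat.triangle_succ, pow_add]
  ring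

lemma qBinomWeight_succ_succ (hq0 : 0 < q) (hq1 : q ≠ 1) (θ : ℝ) {m u : ℕ} (hu : u < m) :
    qBinomWeight q θ (m + 1) (u + 1) =
      qBinomWeight q θ m (u + 1) + θ * q ^ m * qBinomWeight q θ m u := by
  have hpow : q ^ (m - u) * q ^ ((u + 1) * (u + 1 - 1) / 2) = q ^ m * q ^ (u * (u - 1) / 2) := by
    rw [Nat.triangle_succ, ← pow_add, ← pow_add]
    congr 1
    omega
  simp only [qBinomWeight, qBinom_succ_succ hq0 hq1 hu]
  linear_combination (qBinom q m u * θ ^ (u + 1)) * hpow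

-- Rothe's `q`-binomial theorem.
theorem sum_qBinomWeight (hq0 : 0 < q) (hq1 : q ≠ 1) (θ : ℝ) (m : ℕ) :
    ∑ t ∈ Finset.range (m + 1), qBinomWeight q θ m t =
      ∏ i ∈ Finset.range m, (1 + θ * q ^ i) := by
  induction m with
  | zero => simp [qBinomWeight_zero_right hq0 hq1]
  | succ m ih =>
    have hS₁ := Finset.sum_range_succ' (qBinomWeight q θ m) m
    have hS₂ := Finset.sum_range_succ (qBinomWeight q θ m) m
    rw [Finset.sum_range_succ', Finset.sum_range_succ, Finset.sum_congr rfl fun u hu =>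
        qBinomWeight_succ_succ hq0 hq1 θ (Finset.mem_range.mp hu),
      qBinomWeight_succ_self hq0 hq1, qBinomWeight_zero_right hq0 hq1, Finset.sum_add_distrib,
      ← Finset.mul_sum, Finset.prod_range_succ, ← ih]
    linear_combination -hS₁ - θ * q ^ m * hS₂ - qBinomWeight_zero_right hq0 hq1 θ m

lemma qDef_mul_qBinomWeight_succ (hq0 : 0 < q) (hq1 : q ≠ 1) (θ : ℝ) {m u : ℕ}
    (hu : u ≤ m) :
    qDef q (u + 1) * qBinomWeight q θ (m + 1) (u + 1) =
      qNat q (m + 1) * θ * qBinomWeight q θ m u := by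
  have hqu : q ^ u ≠ 0 := pow_ne_zero u hq0.ne'
  rw [qDef_succ hq0.ne' hq1, qBinomWeight, qBinomWeight, Nat.triangle_succ, pow_add]
  linear_combination (qBinom q (m + 1) (u + 1) * q ^ (u * (u - 1) / 2) * θ ^ (u + 1)) *
      div_mul_cancel₀ (qNat q (u + 1)) hqu +
    (q ^ (u * (u - 1) / 2) * θ ^ (u + 1)) * qBinom_succ_succ_mul_qNat hq0 hq1 hu

theorem sum_qDef_mul_qBinomWeight (hq0 : 0 < q) (hq1 : q ≠ 1) (θ : ℝ) (m : ℕ) :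
    ∑ t ∈ Finset.range (m + 2), qDef q t * qBinomWeight q θ (m + 1) t =
      qNat q (m + 1) * θ * ∏ i ∈ Finset.range m, (1 + θ * q ^ i) := by
  rw [Finset.sum_range_succ', Finset.sum_congr rfl fun u hu =>
      qDef_mul_qBinomWeight_succ hq0 hq1 θ (Nat.lt_succ_iff.mp (Finset.mem_range.mp hu)),
    ← Finset.mul_sum, sum_qBinomWeight hq0 hq1, qDef_zero, zero_mul, add_zero]

theorem sum_qDef_mul_qBinomWeight_div_prod (hq0 : 0 < q) (hq1 : q ≠ 1) {θ : ℝ} (hθ : 0 ≤ θ)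
    (m : ℕ) :
    ∑ t ∈ Finset.range (m + 1),
        qDef q t * (qBinomWeight q θ m t / ∏ i ∈ Finset.range m, (1 + θ * q ^ i)) =
      qNat q m * (θ / (1 + θ * q ^ ((m : ℤ) - 1))) := by
  simp_rw [← mul_div_assoc, ← Finset.sum_div]
  rcases m with _ | m
  · simp [qNat_zero, qDef_zero]
  · have hprod : 0 < ∏ i ∈ Finset.range m, (1 + θ * q ^ i) :=
      Finset.prod_pos fun i _ => by positivity
    have hlast : 0 < 1 + θ * q ^ m := by positivity
    rw [sum_qDef_mul_qBinomWeight hq0 hq1, Finset.prod_range_succ,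
      show ((m + 1 : ℕ) : ℤ) - 1 = m by push_cast; ring, zpow_natCast]
    field_simp

theorem qMultinomial_conditional_deformed_mean_general (q : ℝ) (hq0 : 0 < q) (hq1 : q < 1)
    (k : ℕ) (θ : Fin k → ℝ) (hθ : ∀ j, 0 < θ j) (n : ℕ)
    (j : Fin k) (x : Fin k → ℕ)
    (hs : ∑ i ∈ Finset.univ.filter (· < j), x i ≤ n) :
    ∑ t ∈ Finset.range (n - (∑ i ∈ Finset.univ.filter (· < j), x i) + 1),
      qDef q t * (qBinom q (n - ∑ i ∈ Finset.univ.filter (· < j), x i) t *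
        q ^ (t * (t - 1) / 2) * θ j ^ t /
        ∏ i ∈ Finset.range (n - ∑ i ∈ Finset.univ.filter (· < j), x i), (1 + θ j * q ^ i)) =
      qNat q (n - ∑ i ∈ Finset.univ.filter (· < j), x i) *
        (θ j / (1 + θ j * q ^ ((n : ℤ) - (∑ i ∈ Finset.univ.filter (· < j), (x i : ℤ)) - 1))) := by
  have hexp : (n : ℤ) - ∑ i ∈ Finset.univ.filter (· < j), (x i : ℤ) - 1 =
      ((n - ∑ i ∈ Finset.univ.filter (· < j), x i : ℕ) : ℤ) - 1 := by
    rw [Nat.cast_sub hs, Nat.cast_sum]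
  rw [hexp]
  exact sum_qDef_mul_qBinomWeight_div_prod hq0 hq1.ne (hθ j).le _

/-- **Conditional mean of the deformed q-multinomial components**: in the q-multinomial
distribution of the first kind, the conditional distribution of `X_j` given
`X_1 = x_1, …, X_{j-1} = x_{j-1}` is q-binomial of the first kind with parameters
`n - s_{j-1}` and `θ_j`, and the conditional mean of `[X_j]_{1/q}` is
`[n - s_{j-1}]_q θ_j / (1 + θ_j q^{n - s_{j-1} - 1})`, where `s_{j-1} = ∑_{i<j} x_i`. -/
theorem qMultinomial_conditional_deformed_mean (q : ℝ) (hq0 : 0 < q) (hq1 : q < 1)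
    (k : ℕ) (hk : 2 ≤ k) (θ : Fin k → ℝ) (hθ : ∀ j, 0 < θ j) (n : ℕ)
    (j : Fin k) (hj : 1 ≤ (j : ℕ)) (x : Fin k → ℕ)
    (hs : ∑ i ∈ Finset.univ.filter (· < j), x i ≤ n) :
    ∑ t ∈ Finset.range (n - (∑ i ∈ Finset.univ.filter (· < j), x i) + 1),
      qDef q t * (qBinom q (n - ∑ i ∈ Finset.univ.filter (· < j), x i) t *
        q ^ (t * (t - 1) / 2) * θ j ^ t /
        ∏ i ∈ Finset.range (n - ∑ i ∈ Finset.univ.filter (· < j), x i), (1 + θ j * q ^ i)) =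
      qNat q (n - ∑ i ∈ Finset.univ.filter (· < j), x i) *
        (θ j / (1 + θ j * q ^ ((n : ℤ) - (∑ i ∈ Finset.univ.filter (· < j), (x i : ℤ)) - 1))) :=
  qMultinomial_conditional_deformed_mean_general q hq0 hq1 k θ hθ n j x hs
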